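/- If $p_n \leq q_n$ for all $n$, then $\psi_{P,Q}$ is injective and strictly increasing on $[0,1)$. -/

import Mathlib

noncomputable def cantorDigit (p : ℕ → ℕ) (x : ℝ) (n : ℕ) : ℕ :=
  (⌊(∏ i ∈ Finset.range (n + 1), (p i : ℝ)) * Int.fract x⌋).toNat % p n

noncomputable def psiPQ (p q : ℕ → ℕ) (x : ℝ) : ℝ :=
  ∑' n : ℕ, (min (cantorDigit p x n) (q n - 1) : ℝ) / ∏ i ∈ Finset.range (n + 1), (q i : ℝ)

/-!
Let `x < y` in `[0, 1)` and let `N` be the first place where their `P`-digits differ, so that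
`E_N(x) < E_N(y)`. As `p_n ≤ q_n`, `ψ` reads the digits unchanged in base `Q`. The digits of `x`
after place `N` contribute at most `∑_{n > N} (q_n - 1)/(q_1 ⋯ q_n) = 1/(q_1 ⋯ q_N)`, and strictly
less, because `x` has a non-maximal `P`-digit after `N`, which is then at most `q_n - 2`. This loss
is beaten by the gain of at least `1/(q_1 ⋯ q_N)` at place `N`.
-/

open Filter Topology Finset

theorem hasSum_sub_succ_of_antitone {f : ℕ → ℝ} (hf : Antitone f)
    (hlim : Tendsto f atTop (𝓝 0)) : HasSum (fun n => f n - f (n + 1)) (f 0) := by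
  rw [hasSum_iff_tendsto_nat_of_nonneg (fun n => sub_nonneg.2 (hf n.le_succ))]
  simp only [sum_range_sub']
  simpa using hlim.const_sub (f 0)

noncomputable def cantorDenom (p : ℕ → ℕ) (n : ℕ) : ℝ := ∏ i ∈ range n, (p i : ℝ)

section cantorDenom

variable {p : ℕ → ℕ}

theorem cantorDenom_succ (n : ℕ) : cantorDenom p (n + 1) = cantorDenom p n * p n :=
  prod_range_succ _ _

theorem cantorDenom_pos (hp : ∀ n, 0 < p n) (n : ℕ) : 0 < cantorDenom p n :=
  prod_pos fun i _ => Nat.cast_pos.2 (hp i)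

theorem tendsto_cantorDenom_atTop (hp : ∀ n, 2 ≤ p n) :
    Tendsto (cantorDenom p) atTop atTop := by
  refine tendsto_atTop_mono (fun n => ?_) (tendsto_pow_atTop_atTop_of_one_lt one_lt_two)
  calc (2 : ℝ) ^ n = ∏ _i ∈ range n, (2 : ℝ) := by simp
    _ ≤ cantorDenom p n :=
      prod_le_prod (fun _ _ => zero_le_two) fun i _ => by exact_mod_cast hp i

theorem hasSum_sub_one_div_cantorDenom (hp : ∀ n, 2 ≤ p n) (k : ℕ) :
    HasSum (fun n => ((p (n + k) : ℝ) - 1) / cantorDenom p (n + k + 1))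
      (1 / cantorDenom p k) := by
  have hpos := cantorDenom_pos fun n => (hp n).trans_lt' two_pos
  have hanti : Antitone fun n => 1 / cantorDenom p (n + k) := by
    refine antitone_nat_of_succ_le fun n => ?_
    rw [Nat.succ_add, cantorDenom_succ]
    gcongr
    · exact hpos _
    · exact le_mul_of_one_le_right (hpos _).le (by exact_mod_cast (hp _).trans' one_le_two)
  have hlim : Tendsto (fun n => 1 / cantorDenom p (n + k)) atTop (𝓝 0) := by
    simp only [one_div]
    exact ((tendsto_cantorDenom_atTop hp).comp (tendsto_add_atTop_nat k)).inv_tendsto_atTop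
  convert hasSum_sub_succ_of_antitone hanti hlim using 1
  · ext n
    have := hpos (n + k)
    have : (p (n + k) : ℝ) ≠ 0 := by exact_mod_cast ((hp (n + k)).trans_lt' two_pos).ne'
    rw [Nat.succ_add, cantorDenom_succ]
    field_simp
  · simp

end cantorDenom

section digitSeries

variable {q : ℕ → ℕ} {a b : ℕ → ℕ}

theorem cast_div_cantorDenom_le (ha : ∀ n, a n < q n) (n : ℕ) :
    (a n : ℝ) / cantorDenom q (n + 1) ≤ ((q n : ℝ) - 1) / cantorDenom q (n + 1) := by
  have := cantorDenom_pos (fun n => (ha n).trans_le' (Nat.zero_le _)) (n + 1)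
  gcongr
  exact le_sub_iff_add_le.2 (by exact_mod_cast ha n)

theorem summable_cast_div_cantorDenom (hq : ∀ n, 2 ≤ q n) (ha : ∀ n, a n < q n) :
    Summable fun n => (a n : ℝ) / cantorDenom q (n + 1) :=
  .of_nonneg_of_le (fun _ => div_nonneg (Nat.cast_nonneg _)
      (cantorDenom_pos (fun n => (hq n).trans_lt' two_pos) _).le)
    (cast_div_cantorDenom_le ha) (hasSum_sub_one_div_cantorDenom hq 0).summable

theorem tsum_cast_div_cantorDenom_lt (hq : ∀ n, 2 ≤ q n) (ha : ∀ n, a n < q n) {k m : ℕ}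
    (hkm : k ≤ m) (ham : a m + 1 < q m) :
    ∑' n, (a (n + k) : ℝ) / cantorDenom q (n + k + 1) < 1 / cantorDenom q k := by
  refine hasSum_lt (i := m - k) (fun n => cast_div_cantorDenom_le ha (n + k)) ?_
    ((summable_nat_add_iff k).2 (summable_cast_div_cantorDenom hq ha)).hasSum
    (hasSum_sub_one_div_cantorDenom hq k)
  rw [Nat.sub_add_cancel hkm]
  have := cantorDenom_pos (fun n => (hq n).trans_lt' two_pos) (m + 1)
  gcongr
  exact lt_sub_iff_add_lt.2 (by exact_mod_cast ham)

theorem tsum_cast_div_cantorDenom_lt_of_lex (hq : ∀ n, 2 ≤ q n) (ha : ∀ n, a n < q n)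
    (hb : ∀ n, b n < q n) {N m : ℕ} (heq : ∀ k < N, a k = b k) (hN : a N < b N) (hNm : N < m)
    (ham : a m + 1 < q m) :
    ∑' n, (a n : ℝ) / cantorDenom q (n + 1) < ∑' n, (b n : ℝ) / cantorDenom q (n + 1) := by
  have hpos := cantorDenom_pos (fun n => (hq n).trans_lt' two_pos) (N + 1)
  rw [← (summable_cast_div_cantorDenom hq ha).sum_add_tsum_nat_add (N + 1),
    ← (summable_cast_div_cantorDenom hq hb).sum_add_tsum_nat_add (N + 1),
    sum_range_succ, sum_range_succ, sum_congr rfl fun k hk => by rw [heq k (mem_range.1 hk)]]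
  have hhead : (a N : ℝ) / cantorDenom q (N + 1) + 1 / cantorDenom q (N + 1)
      ≤ (b N : ℝ) / cantorDenom q (N + 1) := by
    rw [← add_div]
    gcongr
    exact_mod_cast hN
  have hatail := tsum_cast_div_cantorDenom_lt hq ha hNm ham
  have hbtail : 0 ≤ ∑' n, (b (n + (N + 1)) : ℝ) / cantorDenom q (n + (N + 1) + 1) :=
    tsum_nonneg fun n => div_nonneg (Nat.cast_nonneg _)
      (cantorDenom_pos (fun n => (hq n).trans_lt' two_pos) _).le
  linarith

end digitSeries

/-- The natural number whose mixed-radix digits are the first `n` Cantor digits of `x`. -/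
noncomputable def cantorFloor (p : ℕ → ℕ) (x : ℝ) (n : ℕ) : ℕ :=
  ⌊cantorDenom p n * Int.fract x⌋₊

section cantorFloor

variable {p : ℕ → ℕ}

theorem cantorFloor_zero (x : ℝ) : cantorFloor p x 0 = 0 := by
  simp [cantorFloor, cantorDenom, Int.fract_lt_one]

theorem cantorDigit_eq_cantorFloor_mod (x : ℝ) (n : ℕ) :
    cantorDigit p x n = cantorFloor p x (n + 1) % p n := by
  rw [cantorDigit, Int.floor_toNat]
  rfl

theorem cantorFloor_succ_div (x : ℝ) {n : ℕ} (hp : p n ≠ 0) :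
    cantorFloor p x (n + 1) / p n = cantorFloor p x n := by
  have : (p n : ℝ) ≠ 0 := by exact_mod_cast hp
  rw [cantorFloor, ← Nat.floor_div_natCast, cantorDenom_succ, mul_right_comm,
    mul_div_cancel_right₀ _ this]
  rfl

theorem cantorFloor_succ (x : ℝ) {n : ℕ} (hp : p n ≠ 0) :
    cantorFloor p x (n + 1) = p n * cantorFloor p x n + cantorDigit p x n := by
  rw [cantorDigit_eq_cantorFloor_mod, ← cantorFloor_succ_div x hp, Nat.div_add_mod]

theorem cantorDigit_lt (x : ℝ) (n : ℕ) (hp : 0 < p n) : cantorDigit p x n < p n :=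
  Nat.mod_lt _ hp

theorem exists_cantorDigit_lt_of_fract_lt (hp : ∀ n, 2 ≤ p n) {x y : ℝ}
    (hxy : Int.fract x < Int.fract y) :
    ∃ N, (∀ k < N, cantorDigit p x k = cantorDigit p y k) ∧
      cantorDigit p x N < cantorDigit p y N := by
  have hpos := cantorDenom_pos fun n => (hp n).trans_lt' two_pos
  have hle : ∀ n, cantorFloor p x n ≤ cantorFloor p y n := fun n =>
    Nat.floor_le_floor (mul_le_mul_of_nonneg_left hxy.le (hpos n).le)
  have hne : ∃ n, cantorFloor p x n ≠ cantorFloor p y n := by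
    obtain ⟨n, hn⟩ := (((tendsto_cantorDenom_atTop hp).atTop_mul_const
      (sub_pos.2 hxy)).eventually_gt_atTop 1).exists
    have hx : (cantorFloor p x n : ℝ) ≤ cantorDenom p n * Int.fract x :=
      Nat.floor_le (mul_nonneg (hpos n).le (Int.fract_nonneg x))
    have hy : cantorDenom p n * Int.fract y < cantorFloor p y n + 1 := Nat.lt_floor_add_one _
    refine ⟨n, fun h => ?_⟩
    rw [h] at hx
    nlinarith
  classical
  obtain ⟨N, hN⟩ : ∃ N, Nat.find hne = N + 1 :=
    Nat.exists_eq_succ_of_ne_zero fun h => Nat.find_spec hne (by simp [h, cantorFloor_zero])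
  have heq : ∀ k ≤ N, cantorFloor p x k = cantorFloor p y k := fun k hk =>
    not_not.1 (Nat.find_min hne (by omega))
  have hlt : cantorFloor p x (N + 1) < cantorFloor p y (N + 1) :=
    (hle _).lt_of_ne (hN ▸ Nat.find_spec hne)
  refine ⟨N, fun k hk => ?_, ?_⟩
  · rw [cantorDigit_eq_cantorFloor_mod, cantorDigit_eq_cantorFloor_mod, heq (k + 1) hk]
  · have hpN : p N ≠ 0 := by linarith [hp N]
    rw [cantorFloor_succ x hpN, cantorFloor_succ y hpN, heq N le_rfl] at hlt
    omega

theorem cantorFloor_succ_add_one_of_cantorDigit_eq (x : ℝ) {n : ℕ} (hp : p n ≠ 0)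
    (hx : cantorDigit p x n = p n - 1) :
    cantorFloor p x (n + 1) + 1 = p n * (cantorFloor p x n + 1) := by
  rw [cantorFloor_succ x hp, hx]
  zify [Nat.one_le_iff_ne_zero.2 hp]
  ring

theorem exists_cantorDigit_ne_sub_one (hp : ∀ n, 2 ≤ p n) (x : ℝ) (N : ℕ) :
    ∃ m, N < m ∧ cantorDigit p x m ≠ p m - 1 := by
  by_contra! hmax
  have hpos := cantorDenom_pos fun n => (hp n).trans_lt' two_pos
  -- `G m` is the right end of the depth-`m` digit cylinder around `x`; maximal digits freeze it,
  -- while the cylinder lengths `1 / cantorDenom p m` shrink to `0`.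
  set G : ℕ → ℝ := fun m => (cantorFloor p x m + 1) / cantorDenom p m
  have hstep : ∀ m, N < m → G (m + 1) = G m := fun m hm => by
    have hpm : p m ≠ 0 := by linarith [hp m]
    have hF := congrArg (Nat.cast (R := ℝ))
      (cantorFloor_succ_add_one_of_cantorDigit_eq x hpm (hmax m hm))
    push_cast at hF
    simp only [G, cantorDenom_succ, hF]
    have : (p m : ℝ) ≠ 0 := by exact_mod_cast hpm
    field_simp
  have hconst : ∀ j, G (j + (N + 1)) = G (N + 1) := fun j => by
    induction j with
    | zero => rw [zero_add]
    | succ j ih => rw [Nat.succ_add, hstep _ (by omega), ih]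
  have hlt : Int.fract x < G (N + 1) :=
    (lt_div_iff₀ (hpos _)).2 (by rw [mul_comm]; exact Nat.lt_floor_add_one _)
  have hgap : ∀ j, G (N + 1) - Int.fract x ≤ (cantorDenom p (j + (N + 1)))⁻¹ := fun j => by
    set Q := cantorDenom p (j + (N + 1))
    have hF : (cantorFloor p x (j + (N + 1)) : ℝ) ≤ Q * Int.fract x :=
      Nat.floor_le (mul_nonneg (hpos _).le (Int.fract_nonneg x))
    have hQ : 0 < Q := hpos _
    have : G (j + (N + 1)) ≤ Int.fract x + Q⁻¹ := calc
      G (j + (N + 1)) ≤ (Q * Int.fract x + 1) / Q :=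
        div_le_div_of_nonneg_right (by linarith) hQ.le
      _ = Int.fract x + Q⁻¹ := by field_simp
    linarith [hconst j]
  have hlim : Tendsto (fun j => (cantorDenom p (j + (N + 1)))⁻¹) atTop (𝓝 0) :=
    ((tendsto_cantorDenom_atTop hp).comp (tendsto_add_atTop_nat (N + 1))).inv_tendsto_atTop
  linarith [ge_of_tendsto' hlim hgap]

end cantorFloor

theorem psiPQ_eq_tsum {p q : ℕ → ℕ} (hp : ∀ n, 0 < p n) (hpq : ∀ n, p n ≤ q n)
    (x : ℝ) :
    psiPQ p q x = ∑' n, (cantorDigit p x n : ℝ) / cantorDenom q (n + 1) := by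
  refine tsum_congr fun n => ?_
  have hlt : cantorDigit p x n + 1 ≤ q n := (cantorDigit_lt x n (hp n)).trans_le (hpq n)
  rw [min_eq_left (le_sub_iff_add_le.2 (by exact_mod_cast hlt))]
  rfl

theorem stmt13 (p q : ℕ → ℕ) (hp : ∀ n, 2 ≤ p n) (hq : ∀ n, 2 ≤ q n)
    (hpq : ∀ n, p n ≤ q n) :
    StrictMonoOn (psiPQ p q) (Set.Ico 0 1) ∧ Set.InjOn (psiPQ p q) (Set.Ico 0 1) := by
  have hp0 : ∀ n, 0 < p n := fun n => (hp n).trans_lt' two_pos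
  have hdigit : ∀ x n, cantorDigit p x n < q n := fun x n =>
    (cantorDigit_lt x n (hp0 n)).trans_le (hpq n)
  have hmono : StrictMonoOn (psiPQ p q) (Set.Ico 0 1) := by
    intro x hx y hy hxy
    rw [← Int.fract_eq_self.2 hx, ← Int.fract_eq_self.2 hy] at hxy
    obtain ⟨N, heq, hN⟩ := exists_cantorDigit_lt_of_fract_lt hp hxy
    obtain ⟨m, hNm, hm⟩ := exists_cantorDigit_ne_sub_one hp x N
    have hm' : cantorDigit p x m + 1 < q m := by
      have := cantorDigit_lt x m (hp0 m)
      have := hpq m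
      omega
    rw [psiPQ_eq_tsum hp0 hpq, psiPQ_eq_tsum hp0 hpq]
    exact tsum_cast_div_cantorDenom_lt_of_lex hq (hdigit x) (hdigit y) heq hN hNm hm'
  exact ⟨hmono, hmono.injOn⟩
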